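/- In the standing setup, let 𝐡 be the lift of h with 𝐡^0 = id and write x^t = 𝐡^t(x). Then for every ε > 0 there exists δ ∈ ℝ such that for every x ∈ exp⁻¹(Bd(X) \ {0}): if Re(x^{t₀}) ≤ δ for some t₀ ∈ [0,1], then Re(x^t) < ε for all t ∈ [0,1]. Equivalently, if Re(x^{t₀}) ≥ ε for some t₀, then Re(x^t) > δ for all t ∈ [0,1]. -/

import Mathlib

/-!
Since `exp (𝐡ᵗ x) = hᵗ (exp x)`, the real part of `𝐡ᵗ x` is `log ‖hᵗ (exp x)‖`, so it suffices
to bound `‖hˢ z‖` from below, uniformly on the compact set of `(z, s, t) ∈ Bd X × [0,1]²` with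
`‖hᵗ z‖ ≥ exp ε`. Such a bound exists because `‖hˢ z‖` never vanishes there: `hˢ z = 0 = hˢ 0`
forces `z = 0` by injectivity, and then `hᵗ z = 0` as well.
-/

open Set Metric Topology Filter

/-- The lift `exp⁻¹(Bd(X) \ {0})` of the punctured boundary of `X`. -/
def bdLift (X : Set ℂ) : Set ℂ := Complex.exp ⁻¹' (frontier X \ {0})

/-- `max (f p) (c - g p)` is continuous and positive on `s`, hence bounded below by some
`m > 0`; where `c ≤ g p` the second argument of the maximum is `≤ 0 < m`. -/
theorem IsCompact.exists_pos_le_of_threshold {γ : Type*} [TopologicalSpace γ] {s : Set γ}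
    (hs : IsCompact s) {f g : γ → ℝ} (hf : ContinuousOn f s) (hg : ContinuousOn g s) {c : ℝ}
    (hpos : ∀ p ∈ s, c ≤ g p → 0 < f p) :
    ∃ m > 0, ∀ p ∈ s, c ≤ g p → m ≤ f p := by
  have hmax_pos : ∀ p ∈ s, 0 < max (f p) (c - g p) := by
    intro p hp
    by_cases hcg : c ≤ g p
    · exact lt_max_of_lt_left (hpos p hp hcg)
    · exact lt_max_of_lt_right (by linarith)
  obtain ⟨m, hm, hle⟩ := hs.exists_forall_le' (hf.sup (continuousOn_const.sub hg)) hmax_pos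
  refine ⟨m, hm, fun p hp hcg => ?_⟩
  have hm_le : m ≤ max (f p) (c - g p) := hle p hp
  exact (le_max_iff.1 hm_le).resolve_right (by linarith)

theorem apply_eq_iff_of_injOn_of_fixed {α β γ : Type*} {K : Set α} {I : Set β} {h : α → β → γ}
    {z₀ : α} {w : γ} (hz₀ : z₀ ∈ K) (hinj : ∀ t ∈ I, InjOn (h · t) K)
    (hfix : ∀ t ∈ I, h z₀ t = w) {z : α} (hz : z ∈ K) {t : β} (ht : t ∈ I) :
    h z t = w ↔ z = z₀ :=
  ⟨fun hzt => hinj t ht hz hz₀ (hzt.trans (hfix t ht).symm), fun e => e ▸ hfix t ht⟩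

theorem exists_pos_le_norm_of_injOn_of_fixed {α β E : Type*} [TopologicalSpace α]
    [TopologicalSpace β] [NormedAddCommGroup E] {K : Set α} {I : Set β} (hK : IsCompact K)
    (hI : IsCompact I) {h : α → β → E}
    (hcont : ContinuousOn (fun p : α × β => h p.1 p.2) (K ×ˢ I))
    (hinj : ∀ t ∈ I, InjOn (h · t) K) {z₀ : α} (hz₀ : z₀ ∈ K) (hfix : ∀ t ∈ I, h z₀ t = 0)
    {c : ℝ} (hc : 0 < c) :
    ∃ m > 0, ∀ z ∈ K, ∀ s ∈ I, ∀ t ∈ I, c ≤ ‖h z t‖ → m ≤ ‖h z s‖ := by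
  have hcont_norm : ∀ π : β × β → β, Continuous π → MapsTo π (I ×ˢ I) I →
      ContinuousOn (fun p : α × β × β => ‖h p.1 (π p.2)‖) (K ×ˢ I ×ˢ I) := fun π hπ hmaps =>
    (hcont.comp (continuous_fst.prodMk (hπ.comp continuous_snd)).continuousOn
      fun p hp => ⟨hp.1, hmaps hp.2⟩).norm
  obtain ⟨m, hm, hle⟩ := (hK.prod (hI.prod hI)).exists_pos_le_of_threshold
    (hcont_norm Prod.fst continuous_fst fun _ hp => hp.1)
    (hcont_norm Prod.snd continuous_snd fun _ hp => hp.2) <| by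
      rintro ⟨z, s, t⟩ ⟨hz, hs, ht⟩ hct
      refine norm_pos_iff.2 fun hzs => ?_
      have hz_eq : z = z₀ := (apply_eq_iff_of_injOn_of_fixed hz₀ hinj hfix hz hs).1 hzs
      have hzt : h z t = 0 := (apply_eq_iff_of_injOn_of_fixed hz₀ hinj hfix hz ht).2 hz_eq
      simp only [hzt, norm_zero] at hct
      linarith
  exact ⟨m, hm, fun z hz s hs t ht hct => hle (z, s, t) ⟨hz, hs, ht⟩ hct⟩

theorem lift_real_part_control_general
    (X : Set ℂ) (hXcpt : IsCompact X) (h0 : (0:ℂ) ∈ frontier X)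
    (h : ℂ → ℝ → ℂ)
    (hcont : ContinuousOn (fun p : ℂ × ℝ => h p.1 p.2) (frontier X ×ˢ Set.Icc 0 1))
    (hinj : ∀ t ∈ Set.Icc (0:ℝ) 1, Set.InjOn (fun z => h z t) (frontier X))
    (hfix : ∀ t ∈ Set.Icc (0:ℝ) 1, h 0 t = 0)
    -- 𝐡 = H, the lift of h with 𝐡⁰ = id :
    (H : ℂ → ℝ → ℂ)
    (hHlift : ∀ z ∈ bdLift X, ∀ t ∈ Set.Icc (0:ℝ) 1,
      Complex.exp (H z t) = h (Complex.exp z) t) :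
    ∀ ε > (0:ℝ), ∃ δ : ℝ, ∀ x ∈ bdLift X,
      ((∃ t₀ ∈ Set.Icc (0:ℝ) 1, (H x t₀).re ≤ δ) →
        ∀ t ∈ Set.Icc (0:ℝ) 1, (H x t).re < ε) ∧
      ((∃ t₀ ∈ Set.Icc (0:ℝ) 1, ε ≤ (H x t₀).re) →
        ∀ t ∈ Set.Icc (0:ℝ) 1, δ < (H x t).re) := by
  intro ε _
  have hK : IsCompact (frontier X) :=
    hXcpt.of_isClosed_subset isClosed_frontier hXcpt.isClosed.frontier_subset
  obtain ⟨m, hm, hbound⟩ := exists_pos_le_norm_of_injOn_of_fixed hK isCompact_Icc hcont hinj h0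
    hfix (Real.exp_pos ε)
  have hnorm : ∀ x ∈ bdLift X, ∀ t ∈ Icc (0:ℝ) 1, ‖h (Complex.exp x) t‖ = Real.exp (H x t).re :=
    fun x hx t ht => by rw [← hHlift x hx t ht, Complex.norm_exp]
  have key : ∀ x ∈ bdLift X, ∀ s ∈ Icc (0:ℝ) 1, ∀ t ∈ Icc (0:ℝ) 1,
      (H x s).re ≤ Real.log (m / 2) → (H x t).re < ε := by
    intro x hx s hs t ht hs_le
    by_contra! ht_ge
    have hms := hbound _ hx.1 s hs t ht (hnorm x hx t ht ▸ Real.exp_le_exp.2 ht_ge)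
    have hsm : Real.exp (H x s).re ≤ m / 2 :=
      Real.exp_log (half_pos hm) ▸ Real.exp_le_exp.2 hs_le
    linarith [hnorm x hx s hs]
  refine ⟨Real.log (m / 2), fun x hx => ⟨?_, ?_⟩⟩
  · rintro ⟨t₀, ht₀, hle⟩ t ht
    exact key x hx t₀ ht₀ t ht hle
  · rintro ⟨t₀, ht₀, hge⟩ t ht
    by_contra! hle
    exact (key x hx t ht t₀ ht₀ hle).not_ge hge

/-- uniform control of the real part along the lifted isotopy:
for every ε > 0 there is δ such that if for some time the lifted orbit of `x` has
real part ≤ δ, then its real part stays < ε for all times; equivalently, if at some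
time the real part is ≥ ε, then it stays > δ for all times. -/
theorem lift_real_part_control
    (X : Set ℂ) (hXne : X.Nonempty) (hXcpt : IsCompact X) (hXconn : IsConnected X)
    (hXns : IsConnected Xᶜ) (h0 : (0:ℂ) ∈ frontier X) (hXb : X ⊆ Metric.ball 0 1)
    (h : ℂ → ℝ → ℂ)
    (hcont : ContinuousOn (fun p : ℂ × ℝ => h p.1 p.2) (frontier X ×ˢ Set.Icc 0 1))
    (hinj : ∀ t ∈ Set.Icc (0:ℝ) 1, Set.InjOn (fun z => h z t) (frontier X))
    (hid : ∀ z ∈ frontier X, h z 0 = z)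
    (hfix : ∀ t ∈ Set.Icc (0:ℝ) 1, h 0 t = 0)
    -- 𝐡 = H, the lift of h with 𝐡⁰ = id :
    (H : ℂ → ℝ → ℂ)
    (hHcont : ContinuousOn (fun p : ℂ × ℝ => H p.1 p.2) (bdLift X ×ˢ Set.Icc 0 1))
    (hHinj : ∀ t ∈ Set.Icc (0:ℝ) 1, Set.InjOn (fun z => H z t) (bdLift X))
    (hH0 : ∀ z ∈ bdLift X, H z 0 = z)
    (hHlift : ∀ z ∈ bdLift X, ∀ t ∈ Set.Icc (0:ℝ) 1,
      Complex.exp (H z t) = h (Complex.exp z) t) :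
    ∀ ε > (0:ℝ), ∃ δ : ℝ, ∀ x ∈ bdLift X,
      ((∃ t₀ ∈ Set.Icc (0:ℝ) 1, (H x t₀).re ≤ δ) →
        ∀ t ∈ Set.Icc (0:ℝ) 1, (H x t).re < ε) ∧
      ((∃ t₀ ∈ Set.Icc (0:ℝ) 1, ε ≤ (H x t₀).re) →
        ∀ t ∈ Set.Icc (0:ℝ) 1, δ < (H x t).re) :=
  lift_real_part_control_general X hXcpt h0 h hcont hinj hfix H hHlift
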